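/- arXiv:2605.04122 — 5 statements merged into one kernel-verified Lean document; each statement's English description precedes it below -/
import Mathlib

section
/- Let A ∈ F^{n×n} and suppose W ≤ F^n is A-cyclic (W = ⟨w⟩_A for some w ∈ W). Then every A-invariant subspace U of W is itself A-cyclic; a cyclic vector for U is w·f(A) where f = gcd(p_1,...,p_t) for polynomials p_i with wp_i(A) forming a basis of U. -/
open Polynomial Matrix

/-- `p` is the minimal polynomial of the vector `v` with respect to the matrix `A`
(row vectors, right multiplication). -/
def IsVecMinpoly {F : Type*} [Field F] {n : ℕ} (A : Matrix (Fin n) (Fin n) F)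
    (v : Fin n → F) (p : F[X]) : Prop :=
  p.Monic ∧ v ᵥ* (aeval A p) = 0 ∧ ∀ q : F[X], v ᵥ* (aeval A q) = 0 → p ∣ q

/-- The `A`-span `⟨v⟩_A = {v·p(A) : p ∈ F[X]}` of a vector `v`. -/
def aspan {F : Type*} [Field F] {n : ℕ} (A : Matrix (Fin n) (Fin n) F)
    (v : Fin n → F) : Submodule F (Fin n → F) :=
  Submodule.span F {w | ∃ p : F[X], w = v ᵥ* (aeval A p)}

/-- The companion matrix of a polynomial `p` (for the right-multiplication convention):
identity superdiagonal block, last row the negated coefficients of `p`. -/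
def companion {F : Type*} [Field F] (n : ℕ) (p : F[X]) : Matrix (Fin n) (Fin n) F :=
  Matrix.of fun i j => if (i : ℕ) = n - 1 then -p.coeff j
    else if (i : ℕ) + 1 = (j : ℕ) then 1 else 0

-- general gcd in ideal span lemma
lemma finset_gcd_mem_ideal_span {R : Type*} [CommRing R] [IsDomain R]
    [IsPrincipalIdealRing R] [NormalizedGCDMonoid R] {ι : Type*} [DecidableEq ι]
    (s : Finset ι) (f : ι → R) : s.gcd f ∈ Ideal.span (f '' s) := by
  classical
  induction s using Finset.induction_on with
  | empty => simp [Finset.gcd_empty]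
  | @insert a s ha ih =>
    rw [Finset.gcd_insert]
    have h1 : Ideal.span {f a, s.gcd f} ≤ Ideal.span (f '' ↑(insert a s)) := by
      rw [Ideal.span_le]
      rintro x hx
      simp only [Set.mem_insert_iff, Set.mem_singleton_iff] at hx
      rcases hx with rfl | rfl
      · exact Ideal.subset_span (Set.mem_image_of_mem f (by simp : a ∈ (↑(insert a s) : Set ι)))
      · exact Ideal.span_mono (Set.image_mono (Finset.coe_subset.2 (Finset.subset_insert a s))) ih
    apply h1
    rw [← _root_.span_gcd]
    exact Ideal.subset_span rfl

set_option maxHeartbeats 1000000 in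
/-- An `A`-invariant subspace `U` of an `A`-cyclic space `⟨w⟩_A` is itself `A`-cyclic, with
cyclic vector `w·f(A)` where `f = gcd(p₁, …, p_t)` for polynomials with `w·pᵢ(A)` a basis of `U`. -/
theorem stmt7 {F : Type*} [Field F] [DecidableEq F] {n t : ℕ} (A : Matrix (Fin n) (Fin n) F) (w : Fin n → F)
    (U : Submodule F (Fin n → F)) (hUW : U ≤ aspan A w)
    (hUinv : ∀ u ∈ U, u ᵥ* A ∈ U)
    (p : Fin t → F[X])
    (hbasis : LinearIndependent F (fun i => w ᵥ* (aeval A (p i))) ∧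
      Submodule.span F (Set.range fun i => w ᵥ* (aeval A (p i))) = U) :
    U = aspan A (w ᵥ* (aeval A (Finset.univ.gcd p))) ∧ ∃ u, U = aspan A u := by
  classical
  obtain ⟨-, hspan⟩ := hbasis
  set f := Finset.univ.gcd p with hf
  -- invariance of U under any polynomial in A
  have hpoly : ∀ u ∈ U, ∀ q : F[X], u ᵥ* (aeval A q) ∈ U := by
    intro u hu q
    induction q using Polynomial.induction_on with
    | C a =>
      have h1 : u ᵥ* (aeval A (C a)) = a • u := by
        ext j
        simp [aeval_C, Algebra.algebraMap_eq_smul_one, Matrix.vecMul, dotProduct,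
          Matrix.one_apply, mul_comm]
      rw [h1]; exact U.smul_mem a hu
    | add q r hq hr => simpa [map_add, Matrix.vecMul_add] using U.add_mem hq hr
    | monomial m a hm =>
      have : (C a : F[X]) * X ^ (m + 1) = (C a * X ^ m) * X := by ring
      rw [this, _root_.map_mul, aeval_X, ← Matrix.vecMul_vecMul]
      exact hUinv _ hm
  -- basis vectors are in U
  have hgen : ∀ i, w ᵥ* (aeval A (p i)) ∈ U := by
    intro i
    rw [← hspan]
    exact Submodule.subset_span ⟨i, rfl⟩
  -- the set of polynomials q with w·q(A) ∈ U forms an ideal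
  let I : Ideal F[X] :=
    { carrier := {q | w ᵥ* (aeval A q) ∈ U}
      zero_mem' := by simp
      add_mem' := by
        intro q r hq hr
        simpa [map_add, Matrix.vecMul_add] using U.add_mem hq hr
      smul_mem' := by
        intro c q hq
        have : aeval A (c • q) = aeval A q * aeval A c := by
          rw [smul_eq_mul, mul_comm, _root_.map_mul]
        simp only [Set.mem_setOf_eq, this, ← Matrix.vecMul_vecMul]
        exact hpoly _ hq _ }
  have hfU : w ᵥ* (aeval A f) ∈ U := by
    have h1 : f ∈ Ideal.span (p '' ↑(Finset.univ : Finset (Fin t))) := finset_gcd_mem_ideal_span _ _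
    have h2 : Ideal.span (p '' ↑(Finset.univ : Finset (Fin t))) ≤ I := by
      rw [Ideal.span_le]
      rintro x ⟨i, -, rfl⟩
      exact hgen i
    exact h2 h1
  have hle : aspan A (w ᵥ* (aeval A f)) ≤ U := by
    rw [aspan, Submodule.span_le]
    rintro x ⟨q, rfl⟩
    rw [SetLike.mem_coe, Matrix.vecMul_vecMul, ← _root_.map_mul, _root_.map_mul, ← Matrix.vecMul_vecMul]
    exact hpoly _ hfU _
  have hge : U ≤ aspan A (w ᵥ* (aeval A f)) := by
    rw [← hspan, Submodule.span_le]
    rintro x ⟨i, rfl⟩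
    obtain ⟨q, hq⟩ : f ∣ p i := Finset.gcd_dvd (Finset.mem_univ i)
    apply Submodule.subset_span
    exact ⟨q, by show w ᵥ* (aeval A) (p i) = _; rw [hq, _root_.map_mul, ← Matrix.vecMul_vecMul]⟩
  exact ⟨le_antisymm hge hle, _, le_antisymm hge hle⟩
end

section
/- For every matrix A ∈ F^{n×n} there exists a maximal vector, i.e. a vector v ∈ F^n whose minimal polynomial with respect to A equals the minimal polynomial of A. -/
open Polynomial Matrix

/-! Make `F^n` an `F[X]`-module with `X` acting as `v ↦ v ᵥ* A`, i.e. as `Aᵀ` on column vectors.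
Over the PID `F[X]` every finitely generated module has an element whose annihilator is the
annihilator of the whole module (structure theorem); here the latter is `(μ_{Aᵀ}) = (μ_A)`. -/

theorem Module.End.exists_aeval_apply_eq_zero_iff_minpoly_dvd {K M : Type*} [Field K]
    [AddCommGroup M] [Module K M] [FiniteDimensional K M] (f : Module.End K M) :
    ∃ v : M, ∀ q : K[X], aeval f q v = 0 ↔ minpoly K f ∣ q := by
  obtain ⟨x, hx⟩ := Module.exists_ker_toSpanSingleton_eq_annihilator K[X] (Module.AEval' f)
  obtain ⟨v, rfl⟩ := (Module.AEval'.of f).surjective x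
  rw [← span_minpoly_eq_annihilator] at hx
  refine ⟨v, fun q => ?_⟩
  rw [← Ideal.mem_span_singleton, ← hx, LinearMap.mem_ker, LinearMap.toSpanSingleton_apply,
    ← Module.AEval.of_aeval_smul, LinearEquiv.map_eq_zero_iff]
  rfl

namespace Matrix

variable {m : Type*} [Fintype m] [DecidableEq m]

theorem aeval_transpose {R : Type*} [CommSemiring R] (A : Matrix m m R) (p : R[X]) :
    aeval Aᵀ p = (aeval A p)ᵀ := by
  induction p using Polynomial.induction_on' with
  | add p q hp hq => simp [hp, hq]
  | monomial k a => simp [Algebra.algebraMap_eq_smul_one, transpose_pow]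

theorem minpoly_transpose {K : Type*} [Field K] (A : Matrix m m K) :
    minpoly K Aᵀ = minpoly K A := by
  refine (minpoly.unique _ _ (minpoly.monic A.isIntegral) ?_ fun q hq h => ?_).symm
  · rw [aeval_transpose, minpoly.aeval, transpose_zero]
  · exact minpoly.min K A hq (by rw [← transpose_eq_zero, ← aeval_transpose, h])

theorem vecMul_aeval {R : Type*} [CommSemiring R] (A : Matrix m m R) (p : R[X]) (v : m → R) :
    v ᵥ* aeval A p = aeval (toLin' Aᵀ) p v := by
  rw [← mulVec_transpose, ← aeval_transpose, ← toLin'_apply]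
  exact LinearMap.congr_fun (aeval_algHom_apply toLinAlgEquiv' Aᵀ p).symm v

end Matrix

/-- Every matrix has a maximal vector: a vector whose minimal polynomial equals `μ_A`. -/
theorem stmt11 {F : Type*} [Field F] {n : ℕ} (A : Matrix (Fin n) (Fin n) F) :
    ∃ v : Fin n → F, IsVecMinpoly A v (minpoly F A) := by
  obtain ⟨v, hv⟩ := Module.End.exists_aeval_apply_eq_zero_iff_minpoly_dvd (toLin' Aᵀ)
  rw [minpoly_toLin', minpoly_transpose] at hv
  simp_rw [← vecMul_aeval] at hv
  exact ⟨v, minpoly.monic A.isIntegral, (hv _).2 dvd_rfl, fun q => (hv q).1⟩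
end

section
/- For A ∈ F^{n×n}, the following are equivalent: (1) A is cyclic (some vector v satisfies ⟨v⟩_A = F^n); (2) A is similar to the companion matrix of its characteristic polynomial; (3) χ_A = μ_A; (4) deg(μ_A) = n. -/
/-!
For a vector `v`, the Krylov vectors `v, vA, …, vA^(m-1)` span `⟨v⟩_A` as soon as some monic
`g` of degree `≤ m` kills `A` (reduce modulo `g`). With `g = χ_A` and `m = n`, `v` is cyclic iff
the Krylov matrix `K` with these rows is invertible; Cayley–Hamilton gives `K A = M_χ K`, and
conversely the first unit vector is cyclic for every companion matrix, so cyclicity amounts to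
similarity with `M_χ`. With `g = μ_A`, a cyclic `A` has `deg μ_A ≥ n`. Conversely, `F^n` is a
finitely generated module over the PID `F[X]`, so some `v` has the same annihilator as `A`; its
first `deg μ_A` Krylov vectors are independent, hence cyclic when `deg μ_A = n`. Finally
`μ_A ∣ χ_A`, both monic, with `deg χ_A = n`.
-/

open Polynomial Matrix

section Krylov

variable {F : Type*} [Field F] {n : ℕ}

def krylov (A : Matrix (Fin n) (Fin n) F) (v : Fin n → F) (m : ℕ) :
    Matrix (Fin m) (Fin n) F :=
  Matrix.of fun k => v ᵥ* A ^ (k : ℕ)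

variable (A : Matrix (Fin n) (Fin n) F) (v : Fin n → F)

lemma charpoly_natDegree_eq_dim_fin : A.charpoly.natDegree = n := by
  rw [charpoly_natDegree_eq_dim, Fintype.card_fin]

lemma krylov_row_apply (m : ℕ) (k : Fin m) : (krylov A v m).row k = v ᵥ* A ^ (k : ℕ) := rfl

lemma vecMul_aeval_eq_sum_krylov {m : ℕ} {p : F[X]} (hp : p.degree < m) :
    v ᵥ* aeval A p = ∑ k : Fin m, p.coeff k • (krylov A v m).row k := by
  rcases eq_or_ne p 0 with rfl | hp0
  · simp
  rw [aeval_eq_sum_range' ((natDegree_lt_iff_degree_lt hp0).2 hp), vecMul_sum,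
    ← Fin.sum_univ_eq_sum_range]
  simp only [vecMul_smul, krylov_row_apply]

lemma aspan_eq_span_krylov {g : F[X]} (hg : g.Monic) (hgA : aeval A g = 0) {m : ℕ}
    (hm : g.natDegree ≤ m) : aspan A v = Submodule.span F (Set.range (krylov A v m).row) := by
  apply le_antisymm
  · rw [aspan, Submodule.span_le]
    rintro _ ⟨p, rfl⟩
    have hdeg : (p %ₘ g).degree < m :=
      (degree_modByMonic_lt p hg).trans_le (degree_le_of_natDegree_le hm)
    rw [← aeval_modByMonic_eq_self_of_root hgA, vecMul_aeval_eq_sum_krylov A v hdeg]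
    exact Submodule.sum_smul_mem _ _ fun k _ => Submodule.subset_span ⟨k, rfl⟩
  · rw [Submodule.span_le]
    rintro _ ⟨k, rfl⟩
    exact Submodule.subset_span ⟨X ^ (k : ℕ), by rw [aeval_X_pow, krylov_row_apply]⟩

lemma aspan_eq_top_iff_linearIndependent_krylov :
    aspan A v = ⊤ ↔ LinearIndependent F (krylov A v n).row := by
  have hcard : Fintype.card (Fin n) = Module.finrank F (Fin n → F) := by simp
  rw [aspan_eq_span_krylov A v (charpoly_monic A) (aeval_self_charpoly A)
    (charpoly_natDegree_eq_dim_fin A).le]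
  exact ⟨fun h => linearIndependent_of_top_le_span_of_card_eq_finrank h.ge hcard,
    fun h => h.span_eq_top_of_card_eq_finrank' hcard⟩

lemma natDegree_minpoly_le : (minpoly F A).natDegree ≤ n :=
  (natDegree_le_of_dvd (minpoly_dvd_charpoly A) (charpoly_monic A).ne_zero).trans_eq
    (charpoly_natDegree_eq_dim_fin A)

lemma le_natDegree_minpoly_of_aspan_eq_top (h : aspan A v = ⊤) :
    n ≤ (minpoly F A).natDegree := by
  rw [aspan_eq_span_krylov A v (minpoly.monic (isIntegral A)) (minpoly.aeval F A) le_rfl] at h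
  calc n = Module.finrank F (Submodule.span F (Set.range (krylov A v _).row)) := by
        rw [h, finrank_top, Module.finrank_fin_fun]
    _ ≤ _ := (finrank_range_le_card _).trans_eq (Fintype.card_fin _)

lemma linearIndependent_krylov_natDegree {p : F[X]} (hp : p ≠ 0)
    (hv : ∀ q : F[X], v ᵥ* aeval A q = 0 → p ∣ q) :
    LinearIndependent F (krylov A v p.natDegree).row := by
  rw [Fintype.linearIndependent_iff]
  intro c hc
  set r : F[X] := ((degreeLTEquiv F p.natDegree).symm c : F[X])
  have hr : r.degree < p.natDegree := mem_degreeLT.1 ((degreeLTEquiv F _).symm c).2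
  have hcoeff : ∀ k : Fin p.natDegree, r.coeff k = c k := fun k =>
    congrFun ((degreeLTEquiv F _).apply_symm_apply c) k
  have hr0 : r = 0 := by
    refine eq_zero_of_dvd_of_degree_lt (hv r ?_) (hr.trans_le (degree_eq_natDegree hp).ge)
    rw [vecMul_aeval_eq_sum_krylov A v hr]
    simpa only [hcoeff] using hc
  intro k
  rw [← hcoeff, hr0, coeff_zero]

lemma vecMulLinear_pow_apply (k : ℕ) : (A.vecMulLinear ^ k) v = v ᵥ* A ^ k := by
  induction k generalizing v with
  | zero => simp
  | succ k ih =>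
    rw [pow_succ, Module.End.mul_apply, ih, vecMulLinear_apply, vecMul_vecMul, pow_succ']

lemma aeval_vecMulLinear_apply (q : F[X]) :
    aeval A.vecMulLinear q v = v ᵥ* aeval A q := by
  induction q using Polynomial.induction_on' with
  | add p q hp hq => simp only [map_add, LinearMap.add_apply, hp, hq, vecMul_add]
  | monomial k c =>
    rw [aeval_monomial, aeval_monomial, ← Algebra.smul_def, ← Algebra.smul_def,
      LinearMap.smul_apply, vecMulLinear_pow_apply, vecMul_smul]

lemma exists_vecMul_aeval_eq_zero_iff :
    ∃ v : Fin n → F, ∀ q : F[X], v ᵥ* aeval A q = 0 ↔ aeval A q = 0 := by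
  -- `F^n` as an `F[X]`-module with `X` acting by `w ↦ w ᵥ* A`
  obtain ⟨x, hx⟩ := Module.exists_ker_toSpanSingleton_eq_annihilator F[X]
    (Module.AEval' A.vecMulLinear)
  obtain ⟨v, rfl⟩ := (Module.AEval'.of _).surjective x
  refine ⟨v, fun q => ?_⟩
  have hsmul : ∀ w, q • Module.AEval'.of A.vecMulLinear w = 0 ↔ w ᵥ* aeval A q = 0 := by
    intro w
    rw [← Module.AEval.of_aeval_smul, LinearEquiv.map_eq_zero_iff, Module.End.smul_def,
      aeval_vecMulLinear_apply]
  have hann := SetLike.ext_iff.1 hx q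
  rw [LinearMap.mem_ker, LinearMap.toSpanSingleton_apply, Module.mem_annihilator, hsmul] at hann
  rw [hann, ext_iff_vecMul]
  simp only [vecMul_zero]
  exact ⟨fun h w => (hsmul w).1 (h _), fun h m => by
    obtain ⟨w, rfl⟩ := (Module.AEval'.of _).surjective m
    exact (hsmul w).2 (h w)⟩

lemma exists_aspan_eq_top_iff_natDegree_minpoly :
    (∃ v, aspan A v = ⊤) ↔ (minpoly F A).natDegree = n := by
  refine ⟨fun ⟨v, hv⟩ => (natDegree_minpoly_le A).antisymm
    (le_natDegree_minpoly_of_aspan_eq_top A v hv), fun h => ?_⟩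
  obtain ⟨v, hv⟩ := exists_vecMul_aeval_eq_zero_iff A
  have hli := linearIndependent_krylov_natDegree A v (minpoly.ne_zero (isIntegral A))
    fun q hq => minpoly.dvd F A ((hv q).1 hq)
  rw [h] at hli
  exact ⟨v, (aspan_eq_top_iff_linearIndependent_krylov A v).2 hli⟩

lemma charpoly_eq_minpoly_iff_natDegree_minpoly :
    A.charpoly = minpoly F A ↔ (minpoly F A).natDegree = n := by
  refine ⟨fun h => h ▸ charpoly_natDegree_eq_dim_fin A, fun h => ?_⟩
  exact eq_of_monic_of_dvd_of_natDegree_le (minpoly.monic (isIntegral A)) (charpoly_monic A)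
    (minpoly_dvd_charpoly A) (by rw [charpoly_natDegree_eq_dim_fin, h])

lemma companion_row_of_lt (p : F[X]) {i : Fin n} (hi : (i : ℕ) + 1 < n) :
    (companion n p).row i = Pi.single ⟨i + 1, hi⟩ 1 := by
  funext j
  simp only [row, companion, of_apply, Pi.single_apply, Fin.ext_iff]
  grind

lemma companion_row_last (p : F[X]) {i : Fin n} (hi : (i : ℕ) + 1 = n) :
    (companion n p).row i = -fun j : Fin n => p.coeff j := by
  funext j
  simp [row, companion, show (i : ℕ) = n - 1 by omega]

lemma krylov_mul_eq_companion_mul {p : F[X]} (hp : p.Monic) (hdeg : p.natDegree = n)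
    (hpA : aeval A p = 0) : krylov A v n * A = companion n p * krylov A v n := by
  funext i
  change (krylov A v n).row i ᵥ* A = (companion n p).row i ᵥ* krylov A v n
  rw [krylov_row_apply, vecMul_vecMul, ← pow_succ]
  by_cases hi : (i : ℕ) + 1 < n
  · rw [companion_row_of_lt p hi, single_vecMul, one_smul, krylov_row_apply]
  · have hi : (i : ℕ) + 1 = n := by omega
    have hsum := vecMul_aeval_eq_sum_krylov A v (m := n + 1) (p := p) (by
      rw [degree_eq_natDegree hp.ne_zero, hdeg]; exact_mod_cast n.lt_succ_self)
    have hlead : p.coeff n = 1 := hdeg ▸ hp.coeff_natDegree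
    rw [hpA, vecMul_zero, Fin.sum_univ_castSucc, Fin.val_last, hlead, one_smul] at hsum
    rw [companion_row_last p hi, neg_vecMul, hi, eq_neg_iff_add_eq_zero,
      vecMul_eq_sum _ (krylov A v n), add_comm]
    exact hsum.symm

lemma krylov_units_conj (C : (Matrix (Fin n) (Fin n) F)ˣ) (w : Fin n → F) (m : ℕ) :
    krylov ((↑C⁻¹ : Matrix (Fin n) (Fin n) F) * A * (↑C : Matrix (Fin n) (Fin n) F)) w m
      = krylov A (w ᵥ* (↑C⁻¹ : Matrix (Fin n) (Fin n) F)) m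
        * (↑C : Matrix (Fin n) (Fin n) F) := by
  funext k
  change w ᵥ* _ ^ (k : ℕ) = (w ᵥ* _ ᵥ* A ^ (k : ℕ)) ᵥ* _
  rw [Units.conj_pow', vecMul_vecMul, vecMul_vecMul, Matrix.mul_assoc]

lemma krylov_companion_single_zero (p : F[X]) (hn : 0 < n) :
    krylov (companion n p) (Pi.single ⟨0, hn⟩ 1) n = 1 := by
  have hpow : ∀ k (hk : k < n),
      Pi.single ⟨0, hn⟩ 1 ᵥ* companion n p ^ k = Pi.single ⟨k, hk⟩ 1 := by
    intro k hk
    induction k with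
    | zero => rw [pow_zero, vecMul_one]
    | succ k ih =>
      rw [pow_succ, ← vecMul_vecMul, ih (by omega), single_vecMul, one_smul,
        companion_row_of_lt p hk]
  funext k
  change Pi.single ⟨0, hn⟩ 1 ᵥ* companion n p ^ (k : ℕ) = _
  rw [hpow k k.2]
  funext j
  exact one_eq_pi_single.symm

lemma exists_conj_eq_companion_of_aspan_eq_top (h : aspan A v = ⊤) :
    ∃ C : GL (Fin n) F,
      (↑C⁻¹ : Matrix (Fin n) (Fin n) F) * A * (↑C : Matrix (Fin n) (Fin n) F)
        = companion n A.charpoly := by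
  obtain ⟨K, hK⟩ := linearIndependent_rows_iff_isUnit.1
    ((aspan_eq_top_iff_linearIndependent_krylov A v).1 h)
  refine ⟨K⁻¹, ?_⟩
  rw [inv_inv, hK, krylov_mul_eq_companion_mul A v (charpoly_monic A)
    (charpoly_natDegree_eq_dim_fin A) (aeval_self_charpoly A), mul_assoc, ← hK, Units.mul_inv,
    mul_one]

lemma exists_aspan_eq_top_of_conj_eq_companion {p : F[X]} (C : GL (Fin n) F)
    (hC : (↑C⁻¹ : Matrix (Fin n) (Fin n) F) * A * (↑C : Matrix (Fin n) (Fin n) F)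
      = companion n p) :
    ∃ v, aspan A v = ⊤ := by
  rcases n.eq_zero_or_pos with rfl | hn
  · exact ⟨0, Subsingleton.elim _ _⟩
  set v := Pi.single ⟨0, hn⟩ 1 ᵥ* (↑C⁻¹ : Matrix (Fin n) (Fin n) F)
  refine ⟨v, (aspan_eq_top_iff_linearIndependent_krylov A v).2
    (linearIndependent_rows_iff_isUnit.2 ?_)⟩
  have hK : krylov A v n * (↑C : Matrix (Fin n) (Fin n) F) = 1 := by
    rw [← krylov_units_conj, hC, krylov_companion_single_zero]
  rw [Units.mul_eq_one_iff_eq_inv.1 hK]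
  exact Units.isUnit _

end Krylov

/-- Characterisations of cyclic matrices: cyclicity, similarity to the companion matrix of the
characteristic polynomial, `χ_A = μ_A`, and `deg μ_A = n` are all equivalent. -/
theorem stmt12 {F : Type*} [Field F] {n : ℕ} (A : Matrix (Fin n) (Fin n) F) :
    ((∃ v : Fin n → F, aspan A v = ⊤) ↔
      ∃ C : GL (Fin n) F,
        (↑(C⁻¹) : Matrix (Fin n) (Fin n) F) * A * (↑C : Matrix (Fin n) (Fin n) F) = companion n (Matrix.charpoly A)) ∧
    ((∃ v : Fin n → F, aspan A v = ⊤) ↔ Matrix.charpoly A = minpoly F A) ∧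
    ((∃ v : Fin n → F, aspan A v = ⊤) ↔ (minpoly F A).natDegree = n) := by
  refine ⟨⟨fun ⟨v, hv⟩ => exists_conj_eq_companion_of_aspan_eq_top A v hv,
    fun ⟨C, hC⟩ => exists_aspan_eq_top_of_conj_eq_companion A C hC⟩,
    (exists_aspan_eq_top_iff_natDegree_minpoly A).trans
      (charpoly_eq_minpoly_iff_natDegree_minpoly A).symm,
    exists_aspan_eq_top_iff_natDegree_minpoly A⟩
end

section
/- Let A ∈ GL(n,F) be cyclic and primary with χ_A = μ_A = p^m for p ∈ F[X] irreducible of degree d, and let v be a cyclic vector. Then for each 0 ≤ i ≤ m: ker(p(A)^i) = ⟨v·p(A)^{m-i}⟩_A and dim ker(p(A)^i) = i·d. Moreover, every A-invariant subspace of F^n equals ker(p(A)^i) for some i, so the A-invariant subspaces form a chain of length m. -/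
open Polynomial Matrix

/-! Since `v` is cyclic, `q ↦ v·q(A)` identifies `F^n` with `F[X]/(p^m)` as `F[X]`-modules, so
the `A`-invariant subspaces correspond to the ideals of `F[X]` containing `p^m` (the conductors of
`v` into them). As `p` is prime these are the `(p^j)`, and `(p^(m-i))` corresponds both to the
span of `v·p(A)^(m-i)` and to `ker p(A)^i`; its image is `F[X]/(p^i)`, of dimension `i·deg p`. -/

namespace Matrix

variable {F : Type*} [Field F] {n : ℕ} (A : Matrix (Fin n) (Fin n) F)

noncomputable def vecMulAeval (u : Fin n → F) : F[X] →ₗ[F] (Fin n → F) where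
  toFun q := u ᵥ* aeval A q
  map_add' q r := by rw [map_add, vecMul_add]
  map_smul' c q := by rw [map_smul, vecMul_smul, RingHom.id_apply]

@[simp] lemma vecMulAeval_apply (u : Fin n → F) (q : F[X]) :
    vecMulAeval A u q = u ᵥ* aeval A q := rfl

lemma vecMul_aeval_mul (u : Fin n → F) (q r : F[X]) :
    u ᵥ* aeval A (q * r) = u ᵥ* aeval A q ᵥ* aeval A r := by
  rw [map_mul, vecMul_vecMul]

lemma aspan_eq_range (u : Fin n → F) : aspan A u = LinearMap.range (vecMulAeval A u) := by
  rw [aspan, ← Submodule.span_eq (LinearMap.range (vecMulAeval A u))]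
  congr 1
  ext w
  exact ⟨fun ⟨q, h⟩ => ⟨q, h.symm⟩, fun ⟨q, h⟩ => ⟨q, h.symm⟩⟩

variable {A}

lemma mem_aspan_iff {u w : Fin n → F} :
    w ∈ aspan A u ↔ ∃ q : F[X], w = u ᵥ* aeval A q := by
  rw [aspan_eq_range]
  exact ⟨fun ⟨q, h⟩ => ⟨q, h.symm⟩, fun ⟨q, h⟩ => ⟨q, h.symm⟩⟩

lemma vecMul_aeval_mem_aspan (u : Fin n → F) (q : F[X]) : u ᵥ* aeval A q ∈ aspan A u :=
  mem_aspan_iff.mpr ⟨q, rfl⟩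

lemma aspan_vecMul_aeval (u : Fin n → F) (g : F[X]) :
    aspan A (u ᵥ* aeval A g) = ((Ideal.span {g}).restrictScalars F).map (vecMulAeval A u) := by
  ext w
  simp only [mem_aspan_iff, Submodule.mem_map, Submodule.restrictScalars_mem,
    Ideal.mem_span_singleton', vecMulAeval_apply]
  constructor
  · rintro ⟨r, rfl⟩
    exact ⟨r * g, ⟨r, rfl⟩, by rw [mul_comm, vecMul_aeval_mul]⟩
  · rintro ⟨_, ⟨r, rfl⟩, rfl⟩
    exact ⟨r, by rw [mul_comm, vecMul_aeval_mul]⟩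

lemma ker_vecMulAeval_of_isVecMinpoly {u : Fin n → F} {μ : F[X]} (h : IsVecMinpoly A u μ) :
    LinearMap.ker (vecMulAeval A u) = (Ideal.span {μ}).restrictScalars F := by
  ext q
  simp only [LinearMap.mem_ker, vecMulAeval_apply, Submodule.restrictScalars_mem,
    Ideal.mem_span_singleton]
  refine ⟨h.2.2 q, ?_⟩
  rintro ⟨r, rfl⟩
  rw [vecMul_aeval_mul, h.2.1, zero_vecMul]

lemma finrank_aspan_of_isVecMinpoly {u : Fin n → F} {μ : F[X]} (h : IsVecMinpoly A u μ) :
    Module.finrank F (aspan A u) = μ.natDegree := by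
  rw [aspan_eq_range, ← (LinearMap.quotKerEquivRange _).finrank_eq,
    ker_vecMulAeval_of_isVecMinpoly h,
    (Submodule.Quotient.restrictScalarsEquiv F _).finrank_eq,
    finrank_quotient_span_eq_natDegree]

lemma IsVecMinpoly.vecMul_aeval {u : Fin n → F} {f g : F[X]} (h : IsVecMinpoly A u (f * g))
    (hg : g.Monic) : IsVecMinpoly A (u ᵥ* aeval A f) g := by
  have hf : f ≠ 0 := left_ne_zero_of_mul h.1.ne_zero
  refine ⟨hg, by rw [← vecMul_aeval_mul, h.2.1], fun q hq => ?_⟩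
  rw [← vecMul_aeval_mul] at hq
  exact (mul_dvd_mul_iff_left hf).mp (h.2.2 _ hq)

section Cyclic

variable {v : Fin n → F} (hv : aspan A v = ⊤)
include hv

lemma exists_eq_vecMul_aeval (w : Fin n → F) : ∃ q : F[X], w = v ᵥ* aeval A q :=
  mem_aspan_iff.mp (hv ▸ Submodule.mem_top)

/-- A polynomial kills the cyclic vector `v` iff it kills every `v·r(A)`, i.e. every vector. -/
lemma isVecMinpoly_minpoly : IsVecMinpoly A v (minpoly F A) := by
  refine ⟨minpoly.monic (isIntegral A), by rw [minpoly.aeval, vecMul_zero], fun q hq => ?_⟩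
  refine minpoly.dvd F A (ext_iff_vecMul.mpr fun w => ?_)
  obtain ⟨r, rfl⟩ := exists_eq_vecMul_aeval hv w
  rw [← vecMul_aeval_mul, mul_comm, vecMul_aeval_mul, hq, zero_vecMul, vecMul_zero]

lemma ker_vecMulLinear_aeval {f g : F[X]} (h : IsVecMinpoly A v (f * g)) :
    LinearMap.ker (vecMulLinear (aeval A g)) = aspan A (v ᵥ* aeval A f) := by
  have hg : g ≠ 0 := right_ne_zero_of_mul h.1.ne_zero
  refine le_antisymm (fun w hw => ?_) ?_
  · obtain ⟨q, rfl⟩ := exists_eq_vecMul_aeval hv w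
    rw [LinearMap.mem_ker, vecMulLinear_apply, ← vecMul_aeval_mul] at hw
    obtain ⟨r, rfl⟩ := (mul_dvd_mul_iff_right hg).mp (h.2.2 _ hw)
    rw [vecMul_aeval_mul]
    exact vecMul_aeval_mem_aspan _ r
  · rw [aspan_eq_range, LinearMap.range_le_iff_comap, eq_top_iff]
    intro r _
    rw [Submodule.mem_comap, LinearMap.mem_ker, vecMulLinear_apply, vecMulAeval_apply,
      ← vecMul_aeval_mul, ← vecMul_aeval_mul, ← mul_assoc, mul_right_comm, vecMul_aeval_mul,
      h.2.1, zero_vecMul]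

end Cyclic

section Invariant

variable {W : Submodule F (Fin n → F)} (hW : ∀ w ∈ W, w ᵥ* A ∈ W)
include hW

lemma vecMul_pow_mem {w : Fin n → F} (hw : w ∈ W) (k : ℕ) : w ᵥ* A ^ k ∈ W := by
  induction k with
  | zero => rwa [pow_zero, vecMul_one]
  | succ k ih => rw [pow_succ, ← vecMul_vecMul]; exact hW _ ih

lemma vecMul_aeval_mem {w : Fin n → F} (hw : w ∈ W) (q : F[X]) : w ᵥ* aeval A q ∈ W := by
  rw [aeval_eq_sum_range, vecMul_sum]
  exact W.sum_mem fun k _ => by rw [vecMul_smul]; exact W.smul_mem _ (vecMul_pow_mem hW hw k)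

/-- The `A`-conductor of `v` into `W`, in the sense of Hoffman–Kunze. -/
def aconductor (v : Fin n → F) : Ideal F[X] where
  carrier := W.comap (vecMulAeval A v)
  add_mem' := Submodule.add_mem _
  zero_mem' := Submodule.zero_mem _
  smul_mem' a q hq := by
    change v ᵥ* aeval A (a * q) ∈ W
    rw [mul_comm, vecMul_aeval_mul]
    exact vecMul_aeval_mem hW hq a

lemma mem_aconductor {v : Fin n → F} {q : F[X]} :
    q ∈ aconductor hW v ↔ v ᵥ* aeval A q ∈ W := Iff.rfl

lemma eq_aspan_of_aconductor_eq_span {v : Fin n → F} (hv : aspan A v = ⊤) {g : F[X]}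
    (hg : aconductor hW v = Ideal.span {g}) : W = aspan A (v ᵥ* aeval A g) := by
  have hsurj : Function.Surjective (vecMulAeval A v) :=
    LinearMap.range_eq_top.mp (aspan_eq_range A v ▸ hv)
  rw [aspan_vecMul_aeval, ← hg]
  exact (Submodule.map_comap_eq_of_surjective hsurj W).symm

end Invariant

end Matrix

theorem stmt13_general {F : Type*} [Field F] {n : ℕ} (A : Matrix (Fin n) (Fin n) F)
    (p : F[X]) (hp : p.Monic) (hirr : Irreducible p) (m : ℕ)
    (hmin : minpoly F A = p ^ m)
    (v : Fin n → F) (hv : aspan A v = ⊤) :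
    (∀ i ≤ m,
      LinearMap.ker (Matrix.vecMulLinear (aeval A (p ^ i))) =
        aspan A (v ᵥ* (aeval A (p ^ (m - i)))) ∧
      Module.finrank F (LinearMap.ker (Matrix.vecMulLinear (aeval A (p ^ i)))) =
        i * p.natDegree) ∧
    (∀ W : Submodule F (Fin n → F), (∀ w ∈ W, w ᵥ* A ∈ W) →
      ∃ i ≤ m, W = LinearMap.ker (Matrix.vecMulLinear (aeval A (p ^ i)))) := by
  have hvec : ∀ i ≤ m, IsVecMinpoly A v (p ^ (m - i) * p ^ i) := fun i hi => by
    rw [← pow_add, Nat.sub_add_cancel hi, ← hmin]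
    exact isVecMinpoly_minpoly hv
  have hker : ∀ i ≤ m, LinearMap.ker (vecMulLinear (aeval A (p ^ i))) =
      aspan A (v ᵥ* aeval A (p ^ (m - i))) :=
    fun i hi => ker_vecMulLinear_aeval hv (hvec i hi)
  refine ⟨fun i hi => ⟨hker i hi, ?_⟩, fun W hW => ?_⟩
  · rw [hker i hi, finrank_aspan_of_isVecMinpoly ((hvec i hi).vecMul_aeval (hp.pow i)),
      natDegree_pow]
  obtain ⟨g, hg : aconductor hW v = Ideal.span {g}⟩ :=
    Submodule.IsPrincipal.principal (aconductor hW v)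
  have hgdvd : g ∣ p ^ m := by
    rw [← Ideal.mem_span_singleton, ← hg, mem_aconductor, ← hmin, minpoly.aeval, vecMul_zero]
    exact W.zero_mem
  obtain ⟨j, hj, hassoc⟩ := (dvd_prime_pow hirr.prime m).mp hgdvd
  refine ⟨m - j, m.sub_le j, ?_⟩
  rw [hker _ (m.sub_le j), Nat.sub_sub_self hj]
  exact eq_aspan_of_aconductor_eq_span hW hv
    (hg.trans (Ideal.span_singleton_eq_span_singleton.mpr hassoc))

/-- For a cyclic primary matrix with `χ_A = μ_A = p^m` and cyclic vector `v`:
`ker p(A)^i = ⟨v·p(A)^{m-i}⟩_A`, this space has dimension `i·d`, and every `A`-invariant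
subspace is one of these kernels. -/
theorem stmt13 {F : Type*} [Field F] {n : ℕ} (A : Matrix (Fin n) (Fin n) F) (hA : IsUnit A)
    (p : F[X]) (hp : p.Monic) (hirr : Irreducible p) (m : ℕ)
    (hchar : Matrix.charpoly A = p ^ m) (hmin : minpoly F A = p ^ m)
    (v : Fin n → F) (hv : aspan A v = ⊤) :
    (∀ i ≤ m,
      LinearMap.ker (Matrix.vecMulLinear (aeval A (p ^ i))) =
        aspan A (v ᵥ* (aeval A (p ^ (m - i)))) ∧
      Module.finrank F (LinearMap.ker (Matrix.vecMulLinear (aeval A (p ^ i)))) =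
        i * p.natDegree) ∧
    (∀ W : Submodule F (Fin n → F), (∀ w ∈ W, w ᵥ* A ∈ W) →
      ∃ i ≤ m, W = LinearMap.ker (Matrix.vecMulLinear (aeval A (p ^ i)))) :=
  stmt13_general A p hp hirr m hmin v hv
end

section
/- Let A ∈ GL(n,F) with μ_A = p^m for irreducible p, and let v, w ∈ F^n with μ_{A,v} = p^r, μ_{A,w} = p^s and s ≤ r. Then there exists w' ∈ F^n such that ⟨v⟩_A + ⟨w⟩_A = ⟨v⟩_A ⊕ ⟨w'⟩_A (i.e., the sum equals ⟨v⟩_A + ⟨w'⟩_A and ⟨v⟩_A ∩ ⟨w'⟩_A = {0}). -/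
open Polynomial Matrix

/-!
Make the row vectors `Fⁿ` an `F[X]`-module through `A`, so that `⟨u⟩_A` is the cyclic submodule
generated by `u`. The polynomials `b` with `w·b(A) ∈ ⟨v⟩_A` form an ideal containing `p^s`, hence
generated by some `p^t` with `t ≤ s`; write `w·p^t(A) = v·f(A)`. Multiplying by `p^(s-t)` kills
the left side, so `p^r ∣ p^(s-t) f`, and `s ≤ r` gives `f = p^t g`. Then `w' = w - v·g(A)` spans
the same sum together with `v` and is killed by `p^t`, while `w'·b(A) ∈ ⟨v⟩_A` forces
`w·b(A) ∈ ⟨v⟩_A`, i.e. `p^t ∣ b`, i.e. `w'·b(A) = 0`.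
-/

open Submodule

section Cyclic

variable {R M : Type*} [CommRing R] [AddCommGroup M] [Module R M]

theorem Submodule.span_singleton_sup_span_singleton_sub_smul (v w : M) (g : R) :
    R ∙ v ⊔ R ∙ (w - g • v) = R ∙ v ⊔ R ∙ w := by
  have hgv : ∀ N : Submodule R M, g • v ∈ R ∙ v ⊔ N :=
    fun N => mem_sup_left (smul_mem _ _ (mem_span_singleton_self v))
  refine le_antisymm (sup_le le_sup_left ?_) (sup_le le_sup_left ?_) <;>
    rw [span_singleton_le_iff_mem]
  · exact sub_mem (mem_sup_right (mem_span_singleton_self w)) (hgv _)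
  · simpa using add_mem (mem_sup_right (mem_span_singleton_self (w - g • v))) (hgv _)

variable [IsDomain R] [IsPrincipalIdealRing R]

theorem Ideal.exists_eq_span_singleton_pow_of_pow_mem {p : R} (hp : Prime p) {I : Ideal R}
    {s : ℕ} (hs : p ^ s ∈ I) : ∃ t ≤ s, I = Ideal.span {p ^ t} := by
  obtain ⟨t, hts, hassoc⟩ := (dvd_prime_pow hp s).1 ((IsPrincipal.mem_iff_generator_dvd I).1 hs)
  refine ⟨t, hts, ?_⟩
  rw [← Ideal.span_singleton_generator I, Ideal.span_singleton_eq_span_singleton.2 hassoc]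

theorem Submodule.exists_sup_span_singleton_eq_and_inf_eq_bot {p : R} (hp : Prime p) {r s : ℕ}
    (hsr : s ≤ r) {v w : M} (hv : ∀ q : R, q • v = 0 → p ^ r ∣ q) (hw : p ^ s • w = 0) :
    ∃ w' : M, R ∙ v ⊔ R ∙ w = R ∙ v ⊔ R ∙ w' ∧ R ∙ v ⊓ R ∙ w' = ⊥ := by
  obtain ⟨t, hts, hI⟩ := Ideal.exists_eq_span_singleton_pow_of_pow_mem hp
    (I := (R ∙ v).colon {w}) (mem_colon_singleton.2 (by rw [hw]; exact zero_mem _))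
  have smul_mem_iff : ∀ b : R, b • w ∈ R ∙ v ↔ p ^ t ∣ b := fun b => by
    rw [← mem_colon_singleton, hI, Ideal.mem_span_singleton]
  obtain ⟨f, hf⟩ := mem_span_singleton.1 ((smul_mem_iff _).2 dvd_rfl)
  obtain ⟨g, rfl⟩ : p ^ t ∣ f := by
    have hfv : (p ^ (s - t) * f) • v = 0 := by
      rw [mul_smul, hf, smul_smul, ← pow_add, Nat.sub_add_cancel hts, hw]
    refine (mul_dvd_mul_iff_left (pow_ne_zero (s - t) hp.ne_zero)).1 ?_
    rw [← pow_add]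
    exact (pow_dvd_pow p (by omega)).trans (hv _ hfv)
  have hw' : p ^ t • (w - g • v) = 0 := by rw [smul_sub, smul_smul, hf, sub_self]
  refine ⟨w - g • v, (span_singleton_sup_span_singleton_sub_smul v w g).symm, ?_⟩
  rw [eq_bot_iff]
  rintro x ⟨hxv, hxw'⟩
  obtain ⟨b, rfl⟩ := mem_span_singleton.1 hxw'
  have hbw : b • w ∈ R ∙ v := by
    have : b • w = b • (w - g • v) + (b * g) • v := by rw [smul_sub, mul_smul]; abel
    rw [this]
    exact add_mem hxv (smul_mem _ _ (mem_span_singleton_self v))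
  obtain ⟨c, rfl⟩ := (smul_mem_iff b).1 hbw
  rw [mem_bot, mul_comm, mul_smul, hw', smul_zero]

end Cyclic

section RowVectors

variable {R : Type*} [CommRing R] {n : Type*} [Fintype n] [DecidableEq n]

theorem Matrix.aeval_transpose_s14 (A : Matrix n n R) (f : R[X]) : aeval Aᵀ f = (aeval A f)ᵀ := by
  induction f using Polynomial.induction_on' with
  | add f g hf hg => simp [hf, hg]
  | monomial k c => simp [transpose_pow, Algebra.algebraMap_eq_smul_one]

theorem Matrix.aeval_toLin'_transpose_apply (A : Matrix n n R) (f : R[X]) (x : n → R) :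
    aeval (toLin' Aᵀ) f x = x ᵥ* aeval A f := by
  change aeval (toLinAlgEquiv' Aᵀ) f x = _
  rw [aeval_algEquiv, AlgHom.comp_apply, AlgEquiv.coe_toAlgHom, toLinAlgEquiv'_apply,
    aeval_transpose_s14, mulVec_transpose]

theorem Matrix.smul_aeval'_of_toLin'_transpose (A : Matrix n n R) (f : R[X]) (x : n → R) :
    f • Module.AEval'.of (toLin' Aᵀ) x = Module.AEval'.of (toLin' Aᵀ) (x ᵥ* aeval A f) := by
  rw [← Module.AEval.of_aeval_smul, Module.End.smul_def, aeval_toLin'_transpose_apply]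

end RowVectors

theorem aspan_eq_map_span_singleton {F : Type*} [Field F] {n : ℕ}
    (A : Matrix (Fin n) (Fin n) F) (v : Fin n → F) :
    aspan A v = ((F[X] ∙ Module.AEval'.of (toLin' Aᵀ) v).restrictScalars F).map
      (Module.AEval'.of (toLin' Aᵀ)).symm.toLinearMap := by
  rw [aspan]
  convert span_eq _ using 2
  ext x
  simp [mem_span_singleton, smul_aeval'_of_toLin'_transpose, eq_comm]

theorem stmt14_general {F : Type*} [Field F] {n : ℕ} (A : Matrix (Fin n) (Fin n) F)
    (p : F[X]) (hirr : Irreducible p) (r s : ℕ)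
    (v w : Fin n → F) (hv : IsVecMinpoly A v (p ^ r)) (hw : IsVecMinpoly A w (p ^ s))
    (hsr : s ≤ r) :
    ∃ w' : Fin n → F,
      aspan A v ⊔ aspan A w = aspan A v ⊔ aspan A w' ∧
      aspan A v ⊓ aspan A w' = ⊥ := by
  simp only [aspan_eq_map_span_singleton]
  set e := Module.AEval'.of (toLin' Aᵀ)
  obtain ⟨w', hsup, hinf⟩ := exists_sup_span_singleton_eq_and_inf_eq_bot hirr.prime hsr
    (v := e v) (w := e w)
    (fun q hq => hv.2.2 q <| by
      rwa [smul_aeval'_of_toLin'_transpose, LinearEquiv.map_eq_zero_iff] at hq)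
    (by rw [smul_aeval'_of_toLin'_transpose, hw.2.1, map_zero])
  refine ⟨e.symm w', ?_, ?_⟩ <;> rw [e.apply_symm_apply]
  · rw [← Submodule.map_sup, ← Submodule.map_sup, ← restrictScalars_sup, ← restrictScalars_sup,
      hsup]
  · rw [← Submodule.map_inf _ e.symm.injective, ← restrictScalars_inf, hinf, restrictScalars_bot,
      Submodule.map_bot]

/-- If `μ_A = p^m`, `μ_{A,v} = p^r`, `μ_{A,w} = p^s` with `s ≤ r`, then there is `w'` with
`⟨v⟩_A + ⟨w⟩_A = ⟨v⟩_A ⊕ ⟨w'⟩_A`. -/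
theorem stmt14 {F : Type*} [Field F] {n : ℕ} (A : Matrix (Fin n) (Fin n) F) (hA : IsUnit A)
    (p : F[X]) (hp : p.Monic) (hirr : Irreducible p) (m r s : ℕ)
    (hmin : minpoly F A = p ^ m)
    (v w : Fin n → F) (hv : IsVecMinpoly A v (p ^ r)) (hw : IsVecMinpoly A w (p ^ s))
    (hsr : s ≤ r) :
    ∃ w' : Fin n → F,
      aspan A v ⊔ aspan A w = aspan A v ⊔ aspan A w' ∧
      aspan A v ⊓ aspan A w' = ⊥ :=
  stmt14_general A p hirr r s v w hv hw hsr
end
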